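/- arXiv:2112.09471 — 4 statements merged into one kernel-verified Lean document; each statement's English description precedes it below -/
import Mathlib

section
/- Let $\star$ and $\bar\star$ be two commutative associative products on a vector space $V$ such that the sum product $\xi\,\widehat\star\,\eta := \xi\star\eta + \xi\,\bar\star\,\eta$ is also associative. Then for all real numbers $\lambda,\mu$, the product $\xi\mapsto \lambda(\xi\star\eta)+\mu(\xi\,\bar\star\,\eta)$ is commutative and associative. -/
/-- If `⋆` and `⋆̄` are commutative associative bilinear products on `V` and
their sum is associative, then every linear combination `λ ⋆ + μ ⋆̄` is commutative and
associative. -/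
theorem stmt1 (V : Type*) [AddCommGroup V] [Module ℝ V]
    (star bar : V →ₗ[ℝ] V →ₗ[ℝ] V)
    (hsc : ∀ ξ η : V, star ξ η = star η ξ)
    (hsa : ∀ ξ η ζ : V, star (star ξ η) ζ = star ξ (star η ζ))
    (hbc : ∀ ξ η : V, bar ξ η = bar η ξ)
    (hba : ∀ ξ η ζ : V, bar (bar ξ η) ζ = bar ξ (bar η ζ))
    (hsum : ∀ ξ η ζ : V,
      star (star ξ η + bar ξ η) ζ + bar (star ξ η + bar ξ η) ζ
        = star ξ (star η ζ + bar η ζ) + bar ξ (star η ζ + bar η ζ)) :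
    ∀ lam mu : ℝ,
      (∀ ξ η : V, lam • star ξ η + mu • bar ξ η = lam • star η ξ + mu • bar η ξ) ∧
      (∀ ξ η ζ : V,
        lam • star (lam • star ξ η + mu • bar ξ η) ζ
            + mu • bar (lam • star ξ η + mu • bar ξ η) ζ
          = lam • star ξ (lam • star η ζ + mu • bar η ζ)
            + mu • bar ξ (lam • star η ζ + mu • bar η ζ)) := by
  have hmix : ∀ ξ η ζ : V, star (bar ξ η) ζ + bar (star ξ η) ζ
      = star ξ (bar η ζ) + bar ξ (star η ζ) := by
    intro ξ η ζ
    have h := hsum ξ η ζ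
    simp only [map_add, LinearMap.add_apply, hsa, hba] at h
    linear_combination (norm := module) h
  intro lam mu
  refine ⟨fun ξ η => by rw [hsc, hbc], fun ξ η ζ => ?_⟩
  simp only [map_add, map_smul, LinearMap.add_apply, LinearMap.smul_apply, hsa, hba]
  linear_combination (norm := module) (lam * mu) • hmix ξ η ζ
end

section
/- Let $g_{ij}(u)=\partial^2 F/\partial u^i\partial u^j$ be a Hessian metric in coordinates $u^1,\dots,u^{n_1}$, let $\widehat g_{\alpha\beta}(v)=\partial^2\widehat F/\partial v^\alpha\partial v^\beta$ be a Hessian metric in coordinates $v^1,\dots,v^{n_2}$, and let $f(u)$ be an affine function of $u$ that is nonvanishing on the domain. Then the warped product metric $g_{ij}\,du^i du^j + f(u)\,\widehat g_{\alpha\beta}\,dv^\alpha dv^\beta$ is Hessian in the coordinates $(u^1,\dots,u^{n_1}, y^1,\dots,y^{n_2})$ with $y^\alpha = f(u)v^\alpha$, with potential $F_{\mathsf w}(u,y) = F(u) + f(u)\,\widehat F\bigl(y^1/f(u),\dots,y^{n_2}/f(u)\bigr)$. -/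
/-- Second partial derivative (Hessian bilinear form) of `F` at `x` in directions `a, b`. -/
noncomputable def hess2 {E : Type*} [NormedAddCommGroup E] [NormedSpace ℝ E]
    (F : E → ℝ) (x a b : E) : ℝ :=
  fderiv ℝ (fun z => fderiv ℝ F z a) x b

noncomputable def lmap {n : ℕ} (m : Fin n → ℝ) : (Fin n → ℝ) →L[ℝ] ℝ :=
  ∑ i, m i • (ContinuousLinearMap.proj i : ((Fin n → ℝ)) →L[ℝ] ℝ)

@[simp] theorem lmap_apply {n : ℕ} (m : Fin n → ℝ) (x : Fin n → ℝ) :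
    lmap m x = ∑ i, m i * x i := by
  simp [lmap]

@[simp] theorem lmap_single {n : ℕ} (m : Fin n → ℝ) (i : Fin n) :
    lmap m (Pi.single i 1) = m i := by
  rw [lmap_apply, Finset.sum_eq_single i]
  · simp
  · intro j _ hj; simp [Pi.single_apply, hj]
  · simp

noncomputable def DW {n1 n2 : ℕ} (m : Fin n1 → ℝ) (f : (Fin n1 → ℝ) → ℝ)
    (z : (Fin n1 → ℝ) × (Fin n2 → ℝ)) :
    ((Fin n1 → ℝ) × (Fin n2 → ℝ)) →L[ℝ] (Fin n2 → ℝ) :=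
  (f z.1)⁻¹ • (ContinuousLinearMap.snd ℝ (Fin n1 → ℝ) (Fin n2 → ℝ)) +
    (((ContinuousLinearMap.smulRight (1 : ℝ →L[ℝ] ℝ) (-((f z.1) ^ 2)⁻¹)).comp
      ((lmap m).comp (ContinuousLinearMap.fst ℝ (Fin n1 → ℝ) (Fin n2 → ℝ)))).smulRight z.2)

@[simp] theorem DW_apply {n1 n2 : ℕ} (m : Fin n1 → ℝ) (f : (Fin n1 → ℝ) → ℝ)
    (z : (Fin n1 → ℝ) × (Fin n2 → ℝ)) (v : (Fin n1 → ℝ) × (Fin n2 → ℝ)) :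
    DW m f z v = (f z.1)⁻¹ • v.2 + (lmap m v.1 * -((f z.1) ^ 2)⁻¹) • z.2 := by
  simp [DW, ContinuousLinearMap.smulRight_apply, smul_eq_mul, Finset.sum_mul, mul_assoc]

theorem hess2_eq {E : Type*} [NormedAddCommGroup E] [NormedSpace ℝ E]
    (F : E → ℝ) (hF : ContDiff ℝ (⊤ : ℕ∞) F) (x a b : E) :
    hess2 F x a b = (fderiv ℝ (fderiv ℝ F) x b) a := by
  have hd : ContDiff ℝ (⊤ : ℕ∞) (fderiv ℝ F) := hF.fderiv_right (by simp)
  have h1 : HasFDerivAt (fderiv ℝ F) (fderiv ℝ (fderiv ℝ F) x) x :=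
    ((hd.differentiable (by simp)) x).hasFDerivAt
  have h2 : HasFDerivAt (fun z => fderiv ℝ F z a)
      ((fderiv ℝ F x).comp (0 : E →L[ℝ] E) + (fderiv ℝ (fderiv ℝ F) x).flip a) x :=
    h1.clm_apply (hasFDerivAt_const a x)
  rw [hess2, h2.fderiv]
  simp

theorem hess2_symm {E : Type*} [NormedAddCommGroup E] [NormedSpace ℝ E]
    (F : E → ℝ) (hF : ContDiff ℝ (⊤ : ℕ∞) F) (x a b : E) :
    hess2 F x a b = hess2 F x b a := by
  rw [hess2_eq F hF, hess2_eq F hF]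
  exact second_derivative_symmetric (fun y => ((hF.differentiable (by simp)) y).hasFDerivAt)
    (((hF.fderiv_right (m := 1) (by exact WithTop.coe_le_coe.mpr le_top)).differentiable one_ne_zero x).hasFDerivAt) b a

theorem warped_master (n1 n2 : ℕ)
    (F : (Fin n1 → ℝ) → ℝ) (Fh : (Fin n2 → ℝ) → ℝ)
    (hF : ContDiff ℝ (⊤ : ℕ∞) F) (hFh : ContDiff ℝ (⊤ : ℕ∞) Fh)
    (m0 : ℝ) (m : Fin n1 → ℝ)
    (f : (Fin n1 → ℝ) → ℝ) (hf : ∀ u, f u = m0 + ∑ i, m i * u i)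
    (Fw : ((Fin n1 → ℝ) × (Fin n2 → ℝ)) → ℝ)
    (hFw : ∀ p, Fw p = F p.1 + f p.1 * Fh (fun α => p.2 α / f p.1))
    (u : Fin n1 → ℝ) (y : Fin n2 → ℝ) (hfu : f u ≠ 0)
    (a c : Fin n1 → ℝ) (b d : Fin n2 → ℝ) :
    hess2 Fw (u, y) (a, b) (c, d) =
      hess2 F u a c
      + (fderiv ℝ (fderiv ℝ Fh) ((f u)⁻¹ • y)
          ((f u)⁻¹ • d + (lmap m c * -((f u) ^ 2)⁻¹) • y)) b
      - lmap m a * (fderiv ℝ (fderiv ℝ Fh) ((f u)⁻¹ • y)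
          ((f u)⁻¹ • d + (lmap m c * -((f u) ^ 2)⁻¹) • y)) ((f u)⁻¹ • y) := by
  have hfd : ∀ v : Fin n1 → ℝ, HasFDerivAt f (lmap m) v := by
    intro v
    have hfe : f = fun w => m0 + lmap m w := by
      funext w; rw [hf w, lmap_apply]
    rw [hfe]
    exact ((hasFDerivAt_const m0 v).add (lmap m).hasFDerivAt).congr_fderiv (zero_add _)
  have hfc : Continuous f := by
    have hfe : f = fun w => m0 + lmap m w := by
      funext w; rw [hf w, lmap_apply]
    rw [hfe]
    exact continuous_const.add (lmap m).continuous
  have hFwEq : Fw = fun p => F p.1 + f p.1 * Fh ((f p.1)⁻¹ • p.2) := by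
    funext p
    rw [hFw p]
    have : (fun α => p.2 α / f p.1) = (f p.1)⁻¹ • p.2 := by
      funext γ; simp [div_eq_inv_mul, Pi.smul_apply, smul_eq_mul]
    rw [this]
  have hW : ∀ z : (Fin n1 → ℝ) × (Fin n2 → ℝ), f z.1 ≠ 0 →
      HasFDerivAt (fun p : (Fin n1 → ℝ) × (Fin n2 → ℝ) => (f p.1)⁻¹ • p.2) (DW m f z) z := by
    intro z hz
    have h2 : HasFDerivAt (fun p : (Fin n1 → ℝ) × (Fin n2 → ℝ) => f p.1)
        ((lmap m).comp (ContinuousLinearMap.fst ℝ _ _)) z :=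
      (hfd z.1).comp z (hasFDerivAt_fst)
    have hinv : HasFDerivAt (fun p : (Fin n1 → ℝ) × (Fin n2 → ℝ) => (f p.1)⁻¹)
        ((ContinuousLinearMap.smulRight (1 : ℝ →L[ℝ] ℝ) (-((f z.1) ^ 2)⁻¹)).comp
          ((lmap m).comp (ContinuousLinearMap.fst ℝ _ _))) z :=
      (hasFDerivAt_inv hz).comp z h2
    exact hinv.smul (hasFDerivAt_snd)
  have key : ∀ z : (Fin n1 → ℝ) × (Fin n2 → ℝ), f z.1 ≠ 0 →
      fderiv ℝ Fw z (a, b) =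
        fderiv ℝ F z.1 a + lmap m a * Fh ((f z.1)⁻¹ • z.2)
        + fderiv ℝ Fh ((f z.1)⁻¹ • z.2) b
        - lmap m a * fderiv ℝ Fh ((f z.1)⁻¹ • z.2) ((f z.1)⁻¹ • z.2) := by
    intro z hz
    have h1 : HasFDerivAt (fun p : (Fin n1 → ℝ) × (Fin n2 → ℝ) => F p.1)
        ((fderiv ℝ F z.1).comp (ContinuousLinearMap.fst ℝ _ _)) z :=
      ((hF.differentiable (by simp) z.1).hasFDerivAt).comp z hasFDerivAt_fst
    have h2 : HasFDerivAt (fun p : (Fin n1 → ℝ) × (Fin n2 → ℝ) => f p.1)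
        ((lmap m).comp (ContinuousLinearMap.fst ℝ _ _)) z :=
      (hfd z.1).comp z hasFDerivAt_fst
    have h3 : HasFDerivAt (fun p : (Fin n1 → ℝ) × (Fin n2 → ℝ) => Fh ((f p.1)⁻¹ • p.2))
        ((fderiv ℝ Fh ((f z.1)⁻¹ • z.2)).comp (DW m f z)) z :=
      ((hFh.differentiable (by simp) _).hasFDerivAt).comp z (hW z hz)
    have htot : HasFDerivAt (fun p : (Fin n1 → ℝ) × (Fin n2 → ℝ) =>
        F p.1 + f p.1 * Fh ((f p.1)⁻¹ • p.2)) _ z := h1.add (h2.mul h3)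
    rw [hFwEq, htot.fderiv]
    simp only [ContinuousLinearMap.add_apply, ContinuousLinearMap.coe_comp', Function.comp_apply,
      ContinuousLinearMap.coe_fst', ContinuousLinearMap.coe_snd', ContinuousLinearMap.smul_apply,
      ContinuousLinearMap.smulRight_apply, ContinuousLinearMap.one_apply, smul_eq_mul,
      DW_apply, map_add, map_smul]
    field_simp
    ring
  -- second differentiation
  have hopen : IsOpen {z : (Fin n1 → ℝ) × (Fin n2 → ℝ) | f z.1 ≠ 0} :=
    isOpen_compl_singleton.preimage (hfc.comp continuous_fst)
  have heq : (fun z => fderiv ℝ Fw z (a, b)) =ᶠ[nhds (u, y)]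
      (fun z => fderiv ℝ F z.1 a + lmap m a * Fh ((f z.1)⁻¹ • z.2)
        + fderiv ℝ Fh ((f z.1)⁻¹ • z.2) b
        - lmap m a * fderiv ℝ Fh ((f z.1)⁻¹ • z.2) ((f z.1)⁻¹ • z.2)) :=
    Filter.eventuallyEq_of_mem (hopen.mem_nhds hfu) key
  have hW0 : HasFDerivAt (fun p : (Fin n1 → ℝ) × (Fin n2 → ℝ) => (f p.1)⁻¹ • p.2)
      (DW m f (u, y)) (u, y) := hW (u, y) hfu
  have hg1 : HasFDerivAt (fun z : (Fin n1 → ℝ) × (Fin n2 → ℝ) => fderiv ℝ F z.1)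
      ((fderiv ℝ (fderiv ℝ F) u).comp (ContinuousLinearMap.fst ℝ _ _)) (u, y) :=
    (((hF.fderiv_right (m := 1) (by exact WithTop.coe_le_coe.mpr le_top)).differentiable one_ne_zero u).hasFDerivAt).comp _ hasFDerivAt_fst
  have hg2 : HasFDerivAt
      (fun z : (Fin n1 → ℝ) × (Fin n2 → ℝ) => fderiv ℝ Fh ((f z.1)⁻¹ • z.2))
      ((fderiv ℝ (fderiv ℝ Fh) ((f u)⁻¹ • y)).comp (DW m f (u, y))) (u, y) :=
    (((hFh.fderiv_right (m := 1) (by exact WithTop.coe_le_coe.mpr le_top)).differentiable one_ne_zero _).hasFDerivAt).comp _ hW0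
  have hFhW : HasFDerivAt
      (fun z : (Fin n1 → ℝ) × (Fin n2 → ℝ) => Fh ((f z.1)⁻¹ • z.2))
      ((fderiv ℝ Fh ((f u)⁻¹ • y)).comp (DW m f (u, y))) (u, y) :=
    ((hFh.differentiable (by simp) _).hasFDerivAt).comp _ hW0
  have t1 := hg1.clm_apply (hasFDerivAt_const a (u, y))
  have t2 := hFhW.const_mul (lmap m a)
  have t3 := hg2.clm_apply (hasFDerivAt_const b (u, y))
  have t4 := (hg2.clm_apply hW0).const_mul (lmap m a)
  have htot : HasFDerivAt (fun z : (Fin n1 → ℝ) × (Fin n2 → ℝ) =>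
      fderiv ℝ F z.1 a + lmap m a * Fh ((f z.1)⁻¹ • z.2) + fderiv ℝ Fh ((f z.1)⁻¹ • z.2) b
        - lmap m a * fderiv ℝ Fh ((f z.1)⁻¹ • z.2) ((f z.1)⁻¹ • z.2)) _ (u, y) :=
    ((t1.add t2).add t3).sub t4
  rw [hess2, Filter.EventuallyEq.fderiv_eq heq, htot.fderiv]
  rw [hess2_eq F hF]
  simp only [ContinuousLinearMap.add_apply, ContinuousLinearMap.sub_apply,
    ContinuousLinearMap.coe_comp', Function.comp_apply, ContinuousLinearMap.coe_fst',
    ContinuousLinearMap.coe_snd', ContinuousLinearMap.smul_apply, ContinuousLinearMap.flip_apply,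
    ContinuousLinearMap.zero_apply, ContinuousLinearMap.comp_zero, map_zero,
    ContinuousLinearMap.zero_comp, smul_eq_mul, DW_apply, map_add, map_smul]
  ring

/-- if `g = Hess F` in coordinates `u` and `ĝ = Hess F̂` in coordinates `v`,
and `f(u)` is a nonvanishing affine function, then the warped product metric
`g du du + f ĝ dv dv` is Hessian in the coordinates `(u, y)`, `yᵅ = f(u)vᵅ`, with
potential `F_w(u,y) = F(u) + f(u) F̂(y/f(u))`; concretely, the second partial derivatives
of `F_w` in the `(u,y)`-coordinates reproduce exactly the components of the warped-product
metric written in these coordinates. -/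
theorem stmt10 (n1 n2 : ℕ)
    (F : (Fin n1 → ℝ) → ℝ) (Fh : (Fin n2 → ℝ) → ℝ)
    (hF : ContDiff ℝ (⊤ : ℕ∞) F) (hFh : ContDiff ℝ (⊤ : ℕ∞) Fh)
    (m0 : ℝ) (m : Fin n1 → ℝ)
    (f : (Fin n1 → ℝ) → ℝ) (hf : ∀ u, f u = m0 + ∑ i, m i * u i)
    (Fw : ((Fin n1 → ℝ) × (Fin n2 → ℝ)) → ℝ)
    (hFw : ∀ p, Fw p = F p.1 + f p.1 * Fh (fun α => p.2 α / f p.1)) :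
    ∀ (u : Fin n1 → ℝ) (y : Fin n2 → ℝ), f u ≠ 0 →
      (∀ i j : Fin n1,
        hess2 Fw (u, y) (Pi.single i 1, 0) (Pi.single j 1, 0)
          = hess2 F u (Pi.single i 1) (Pi.single j 1)
            + (1 / (f u) ^ 3) *
              (∑ α, ∑ β,
                hess2 Fh (fun γ => y γ / f u) (Pi.single α 1) (Pi.single β 1) * y α * y β)
              * m i * m j) ∧
      (∀ (j : Fin n1) (β : Fin n2),
        hess2 Fw (u, y) (0, Pi.single β 1) (Pi.single j 1, 0)
          = -(m j) * (1 / (f u) ^ 2) *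
              (∑ α, hess2 Fh (fun γ => y γ / f u) (Pi.single α 1) (Pi.single β 1) * y α)) ∧
      (∀ α β : Fin n2,
        hess2 Fw (u, y) (0, Pi.single α 1) (0, Pi.single β 1)
          = (1 / f u) * hess2 Fh (fun γ => y γ / f u) (Pi.single α 1) (Pi.single β 1)) := by

  intro u y hfu
  have hwpt : (fun γ => y γ / f u) = (f u)⁻¹ • y := by
    funext γ; simp [div_eq_inv_mul]
  simp only [hwpt]
  set w : Fin n2 → ℝ := (f u)⁻¹ • y with hw
  set H2 : (Fin n2 → ℝ) →L[ℝ] (Fin n2 → ℝ) →L[ℝ] ℝ := fderiv ℝ (fderiv ℝ Fh) w with hH2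
  -- conversion between H2 and hess2
  have hconv : ∀ v ξ : Fin n2 → ℝ, (H2 ξ) v = hess2 Fh w v ξ :=
    fun v ξ => (hess2_eq Fh hFh w v ξ).symm
  have hsing : ∀ (β : Fin n2) (t : ℝ),
      (Pi.single β t : Fin n2 → ℝ) = t • (Pi.single β (1 : ℝ) : Fin n2 → ℝ) := by
    intro β t; funext γ; simp [Pi.single_apply, Pi.smul_apply, mul_ite]
  have hyapp : ∀ (L : (Fin n2 → ℝ) →L[ℝ] ℝ), L y = ∑ β, y β * L (Pi.single β 1) := by
    intro L
    conv_lhs => rw [← Finset.univ_sum_single y]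
    rw [map_sum]
    refine Finset.sum_congr rfl fun β _ => ?_
    rw [hsing β (y β), map_smul, smul_eq_mul]
  have hyH : H2 y = ∑ α, y α • H2 (Pi.single α 1) := by
    conv_lhs => rw [← Finset.univ_sum_single y]
    rw [map_sum]
    refine Finset.sum_congr rfl fun α _ => ?_
    rw [hsing α (y α), map_smul]
  have hyHapp : ∀ v : Fin n2 → ℝ, (H2 y) v = ∑ α, y α * (H2 (Pi.single α 1)) v := by
    intro v
    rw [hyH]
    simp [ContinuousLinearMap.sum_apply, ContinuousLinearMap.smul_apply, smul_eq_mul]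
  have hzero : ∀ v : Fin n1 → ℝ, hess2 F u (0 : Fin n1 → ℝ) v = 0 := by
    intro v
    rw [hess2_eq F hF]
    simp
  refine ⟨?_, ?_, ?_⟩
  · -- case (i,j)
    intro i j
    rw [warped_master n1 n2 F Fh hF hFh m0 m f hf Fw hFw u y hfu
      (Pi.single i 1) (Pi.single j 1) 0 0]
    have hT : (H2 y) y = ∑ α, ∑ β,
        hess2 Fh w (Pi.single α 1) (Pi.single β 1) * y α * y β := by
      rw [hyHapp y]
      refine Finset.sum_congr rfl fun α _ => ?_
      rw [hyapp (H2 (Pi.single α 1)), Finset.mul_sum]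
      refine Finset.sum_congr rfl fun β _ => ?_
      rw [hconv, hess2_symm Fh hFh]
      ring
    have e1 : (fderiv ℝ (fderiv ℝ Fh) w
        ((f u)⁻¹ • (0 : Fin n2 → ℝ) + (lmap m (Pi.single j 1 : Fin n1 → ℝ) * -((f u) ^ 2)⁻¹) • y))
        (0 : Fin n2 → ℝ) = 0 := by
      simp
    have e2 : (fderiv ℝ (fderiv ℝ Fh) w
        ((f u)⁻¹ • (0 : Fin n2 → ℝ)
          + (lmap m (Pi.single j 1 : Fin n1 → ℝ) * -((f u) ^ 2)⁻¹) • y)) w =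
        (m j * -((f u) ^ 2)⁻¹) * ((f u)⁻¹ * (H2 y) y) := by
      rw [← hH2]
      simp only [smul_zero, zero_add, lmap_single, map_smul, ContinuousLinearMap.smul_apply,
        smul_eq_mul, hw]
      ring
    rw [e1, e2, hT, lmap_single]
    ring
  · -- case (j, β)
    intro j β
    rw [warped_master n1 n2 F Fh hF hFh m0 m f hf Fw hFw u y hfu
      0 (Pi.single j 1) (Pi.single β 1) 0]
    have e2 : (fderiv ℝ (fderiv ℝ Fh) w
        ((f u)⁻¹ • (0 : Fin n2 → ℝ) + (lmap m (Pi.single j 1 : Fin n1 → ℝ) * -((f u) ^ 2)⁻¹) • y))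
        (Pi.single β 1 : Fin n2 → ℝ)
        = (m j * -((f u) ^ 2)⁻¹) * (H2 y) (Pi.single β 1 : Fin n2 → ℝ) := by
      rw [← hH2]
      simp only [smul_zero, zero_add, lmap_single, map_smul, ContinuousLinearMap.smul_apply,
        smul_eq_mul]
    have hT : (H2 y) (Pi.single β 1) = ∑ α,
        hess2 Fh w (Pi.single α 1) (Pi.single β 1) * y α := by
      rw [hyHapp]
      refine Finset.sum_congr rfl fun α _ => ?_
      rw [hconv, hess2_symm Fh hFh]
      ring
    rw [hzero, e2, hT]
    simp only [map_zero, zero_mul, sub_zero, zero_add, lmap_single]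
    ring
  · -- case (α, β)
    intro α β
    rw [warped_master n1 n2 F Fh hF hFh m0 m f hf Fw hFw u y hfu
      0 0 (Pi.single α 1) (Pi.single β 1)]
    have e2 : (fderiv ℝ (fderiv ℝ Fh) w
        ((f u)⁻¹ • (Pi.single β 1 : Fin n2 → ℝ) + (lmap m (0 : Fin n1 → ℝ) * -((f u) ^ 2)⁻¹) • y))
        (Pi.single α 1 : Fin n2 → ℝ)
        = (f u)⁻¹ * (H2 (Pi.single β 1 : Fin n2 → ℝ)) (Pi.single α 1 : Fin n2 → ℝ) := by
      rw [← hH2]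
      simp [map_smul, ContinuousLinearMap.smul_apply, smul_eq_mul]
    rw [hzero, e2, hconv]
    simp only [map_zero, zero_mul, sub_zero, zero_add]
    ring
end

section
/- Let $g$ be a contravariant metric on a domain with coordinates $u$, let $f$ be a smooth positive function satisfying $\operatorname{grad}_g f = f\,(\alpha - 4K u)$ for a constant vector $\alpha$ and constant $K$ (where $u$ denotes the position vector field), and let $h$ be another affine function, not proportional to $f$, satisfying $\operatorname{grad}_g h = h\,(\beta - 4K u)$ for a constant vector $\beta$. Then $g(\mathrm df,\mathrm dh) = -4K f h$, and the constants satisfy $\langle \mathrm d f,\beta\rangle + 4K f(0) = 0$ and $\langle \mathrm d h,\alpha\rangle + 4K h(0) = 0$. -/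
/-- if `f, h` are non-proportional affine functions on a connected open
domain with `grad_g f = f(α - 4Ku)` and `grad_g h = h(β - 4Ku)`, then
`g(df, dh) = -4K f h`, `⟨df, β⟩ + 4K f(0) = 0`, and `⟨dh, α⟩ + 4K h(0) = 0`. -/
theorem stmt17 (n : ℕ) (s : Set (Fin n → ℝ)) (hs : IsOpen s) (hconn : IsConnected s)
    (g : (Fin n → ℝ) → Matrix (Fin n) (Fin n) ℝ)
    (hgsym : ∀ u i j, g u i j = g u j i)
    (K f0 h0 : ℝ) (m l : Fin n → ℝ) (A Bv : Fin n → ℝ)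
    (f h : (Fin n → ℝ) → ℝ)
    (hf : ∀ u, f u = f0 + ∑ i, m i * u i)
    (hh : ∀ u, h u = h0 + ∑ i, l i * u i)
    (hfpos : ∀ u ∈ s, 0 < f u)
    (hindep : ∀ c d : ℝ, (∀ u ∈ s, c * f u + d * h u = 0) → c = 0 ∧ d = 0)
    (hgradf : ∀ u ∈ s, ∀ i, (∑ j, g u i j * m j) = f u * (A i - 4 * K * u i))
    (hgradh : ∀ u ∈ s, ∀ i, (∑ j, g u i j * l j) = h u * (Bv i - 4 * K * u i)) :
    (∀ u ∈ s, ∑ i, ∑ j, g u i j * m i * l j = -4 * K * f u * h u) ∧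
    (∑ i, m i * Bv i) + 4 * K * f0 = 0 ∧
    (∑ i, l i * A i) + 4 * K * h0 = 0 := by
  have key1 : ∀ u ∈ s, (∑ i, ∑ j, g u i j * m i * l j)
      = h u * ((∑ i, m i * Bv i) + 4 * K * f0) - 4 * K * f u * h u := by
    intro u hu
    have e1 : (∑ i, ∑ j, g u i j * m i * l j)
        = ∑ i, m i * (h u * (Bv i - 4 * K * u i)) := by
      refine Finset.sum_congr rfl fun i _ => ?_
      rw [← hgradh u hu i, Finset.mul_sum]
      refine Finset.sum_congr rfl fun j _ => ?_
      ring
    rw [e1]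
    have e2 : ∑ i, m i * (h u * (Bv i - 4 * K * u i))
        = h u * (∑ i, m i * Bv i) - 4 * K * h u * (∑ i, m i * u i) := by
      rw [Finset.mul_sum, Finset.mul_sum, ← Finset.sum_sub_distrib]
      refine Finset.sum_congr rfl fun i _ => ?_
      ring
    rw [e2, hf u]
    ring
  have key2 : ∀ u ∈ s, (∑ i, ∑ j, g u i j * m i * l j)
      = f u * ((∑ i, l i * A i) + 4 * K * h0) - 4 * K * f u * h u := by
    intro u hu
    have e1 : (∑ i, ∑ j, g u i j * m i * l j)
        = ∑ j, l j * (f u * (A j - 4 * K * u j)) := by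
      rw [Finset.sum_comm]
      refine Finset.sum_congr rfl fun j _ => ?_
      rw [← hgradf u hu j, Finset.mul_sum]
      refine Finset.sum_congr rfl fun i _ => ?_
      rw [hgsym u i j]
      ring
    rw [e1]
    have e2 : ∑ j, l j * (f u * (A j - 4 * K * u j))
        = f u * (∑ j, l j * A j) - 4 * K * f u * (∑ j, l j * u j) := by
      rw [Finset.mul_sum, Finset.mul_sum, ← Finset.sum_sub_distrib]
      refine Finset.sum_congr rfl fun j _ => ?_
      ring
    rw [e2, hh u]
    ring
  have hcd := hindep ((∑ j, l j * A j) + 4 * K * h0) (-((∑ i, m i * Bv i) + 4 * K * f0))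
    (by
      intro u hu
      have := (key1 u hu).symm.trans (key2 u hu)
      nlinarith [this])
  refine ⟨fun u hu => ?_, ?_, ?_⟩
  · rw [key1 u hu]
    have : (∑ i, m i * Bv i) + 4 * K * f0 = 0 := by
      have := hcd.2; linarith
    rw [this]; ring
  · have := hcd.2; linarith
  · exact hcd.1
end

section
/- Let $g$ and $\widehat g$ be contravariant metrics in coordinates $u=(u^1,\dots,u^{n_1})$ and $v=(v^1,\dots,v^{n_2})$, and let $f(u)$ be a positive affine function with $\operatorname{grad}_g f = f(\alpha-4Ku)$ and $\tfrac1f g(\mathrm df,\mathrm df)=4\widehat K - 4Kf$. Then in the coordinates $(u, y)$ with $y^\alpha=f(u)v^\alpha$, the covariant warped product metric $g^{-1}\,du\,du + f\,\widehat g^{-1}\,dv\,dv$ has contravariant matrix $\begin{pmatrix} g & (\alpha-4Ku)\,y^\top\\ y\,(\alpha-4Ku)^\top & (4\widehat K f - 4Kf^2)\, v v^\top + f\,\widehat g\end{pmatrix}$; in particular, if $\widehat g^{ij} = \widehat b^{ij} + \widehat a^{ij}_s v^s - 4\widehat K v^iv^j$, then the lower-right block equals $f(0)\widehat b + \widehat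 a(y) + m(u)\widehat b - 4K\, y\,y^\top$, where $m(u)=f(u)-f(0)$, so the full contravariant metric is of the form $B + A(u,y) - 4K\,(u,y)(u,y)^\top$ with $B$ constant and $A$ linear. -/
open Matrix

/-!
The Jacobian of `(u, v) ↦ (u, f(u) v)` is `J = [[1, 0], [v ⊗ df, f]]`, so conjugating
`diag(g, f⁻¹ ĝ)` by it is a rank-one block computation: the off-diagonal blocks are
`(g df) ⊗ v` and the lower-right block picks up `g(df, df) · v vᵀ`. The hypotheses on `f`
turn `g df` into `f (α - 4Ku)` and `g(df, df)` into `f (4K̂ - 4Kf)`, and since `y = f v`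
the factors `f` are absorbed into `y`.
-/

theorem fromBlocks_warped_mul_mul_transpose {R ι κ : Type*} [Field R] [Fintype ι] [Fintype κ]
    [DecidableEq ι] [DecidableEq κ] (g : Matrix ι ι R) (gh : Matrix κ κ R) (v : κ → R)
    (dF : ι → R) (F : R) :
    fromBlocks 1 0 (vecMulVec v dF) (F • 1) * fromBlocks g 0 0 (F⁻¹ • gh) *
        (fromBlocks 1 0 (vecMulVec v dF) (F • 1))ᵀ =
      fromBlocks g (vecMulVec (g *ᵥ dF) v) (vecMulVec v (dF ᵥ* g))
        ((dF ⬝ᵥ g *ᵥ dF) • vecMulVec v v + F • gh) := by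
  rw [fromBlocks_transpose, fromBlocks_multiply, fromBlocks_multiply]
  -- `F * F⁻¹ * F = F` holds also for `F = 0`
  simp only [Matrix.mul_zero, Matrix.zero_mul, Matrix.mul_one, Matrix.one_mul, add_zero,
    zero_add, smul_zero, transpose_one, transpose_zero, transpose_smul, transpose_vecMulVec,
    Matrix.smul_mul, Matrix.mul_smul, smul_smul, vecMulVec_mul, mul_vecMulVec, vecMulVec_mulVec,
    ← dotProduct_mulVec, op_smul_eq_smul, smul_vecMulVec, ← mul_assoc, mul_inv_mul_cancel]

theorem stmt18_general (n1 n2 : ℕ) (K Kh m0 : ℝ)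
    (m A : Fin n1 → ℝ)
    (u : Fin n1 → ℝ) (v : Fin n2 → ℝ)
    (g : Matrix (Fin n1) (Fin n1) ℝ) (hgsym : ∀ i j, g i j = g j i)
    (bh : Matrix (Fin n2) (Fin n2) ℝ) (ah : Fin n2 → Fin n2 → Fin n2 → ℝ)
    (gh : Matrix (Fin n2) (Fin n2) ℝ)
    (hgh : ∀ α β, gh α β = bh α β + (∑ σ, ah α β σ * v σ) - 4 * Kh * v α * v β)
    (F : ℝ) (hF : F = m0 + ∑ i, m i * u i)
    (hgrad : ∀ i, (∑ j, g i j * m j) = F * (A i - 4 * K * u i))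
    (hlen : (∑ i, ∑ j, g i j * m i * m j) = F * (4 * Kh - 4 * K * F))
    (y : Fin n2 → ℝ) (hy : ∀ α, y α = F * v α)
    (J G : Matrix (Fin n1 ⊕ Fin n2) (Fin n1 ⊕ Fin n2) ℝ)
    (hJ : J = Matrix.fromBlocks 1 0 (Matrix.of fun α i => v α * m i)
      (F • (1 : Matrix (Fin n2) (Fin n2) ℝ)))
    (hG : G = Matrix.fromBlocks g 0 0 (F⁻¹ • gh)) :
    J * G * Jᵀ =
      Matrix.fromBlocks g
        (Matrix.of fun i α => (A i - 4 * K * u i) * y α)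
        (Matrix.of fun α i => y α * (A i - 4 * K * u i))
        (Matrix.of fun α β =>
          (4 * Kh * F - 4 * K * F ^ 2) * v α * v β + F * gh α β) ∧
    J * G * Jᵀ =
      Matrix.fromBlocks g
        (Matrix.of fun i α => (A i - 4 * K * u i) * y α)
        (Matrix.of fun α i => y α * (A i - 4 * K * u i))
        (Matrix.of fun α β =>
          m0 * bh α β + (∑ σ, ah α β σ * y σ) + (∑ i, m i * u i) * bh α β
            - 4 * K * y α * y β) := by
  have hgT : gᵀ = g := Matrix.ext fun i j => hgsym j i
  have hgm : g *ᵥ m = F • (A - (4 * K) • u) := funext fun i => by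
    simpa [mulVec, dotProduct] using hgrad i
  have hmg : m ᵥ* g = g *ᵥ m := by simpa [hgT] using vecMul_transpose g m
  have hmgm : m ⬝ᵥ g *ᵥ m = F * (4 * Kh - 4 * K * F) := by
    rw [← hlen]
    simp only [dotProduct, mulVec, Finset.mul_sum]
    exact Finset.sum_congr rfl fun i _ => Finset.sum_congr rfl fun j _ => by ring
  have hblocks : J * G * Jᵀ =
      fromBlocks g
        (of fun i α => (A i - 4 * K * u i) * y α)
        (of fun α i => y α * (A i - 4 * K * u i))
        (of fun α β => (4 * Kh * F - 4 * K * F ^ 2) * v α * v β + F * gh α β) := by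
    rw [hJ, hG, show (of fun α i => v α * m i) = vecMulVec v m from rfl,
      fromBlocks_warped_mul_mul_transpose, hmg, hmgm, hgm]
    congr 1 <;> ext <;>
      simp only [Matrix.add_apply, Matrix.smul_apply, Pi.smul_apply, Pi.sub_apply,
        vecMulVec_apply, smul_eq_mul, of_apply, hy] <;> ring
  refine ⟨hblocks, hblocks.trans ?_⟩
  congr 1
  ext α β
  have hay : ∑ σ, ah α β σ * y σ = F * ∑ σ, ah α β σ * v σ := by
    rw [Finset.mul_sum]
    exact Finset.sum_congr rfl fun σ _ => by rw [hy]; ring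
  rw [of_apply, of_apply, hgh, hay, hy, hy]
  linear_combination bh α β * hF

/-- pointwise form of the warped-product computation. With
`G_w = J G Jᵀ`, `J = [[Id, 0], [v·df, f·Id]]`, `G = diag(g, f⁻¹ ĝ)`, the contravariant
warped product metric in the coordinates `(u, y)`, `yᵅ = f(u) vᵅ`, has the block form
`[[g, (α - 4Ku) yᵀ], [y (α - 4Ku)ᵀ, (4K̂f - 4Kf²) v vᵀ + f ĝ]]`; in particular, for
`ĝ = b̂ + â(v) - 4K̂ v vᵀ` the lower-right block equals
`f(0) b̂ + â(y) + m(u) b̂ - 4K y yᵀ`, so the full metric is constant + linear - `4K`·quadratic. -/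
theorem stmt18 (n1 n2 : ℕ) (K Kh m0 : ℝ)
    (m A : Fin n1 → ℝ)
    (u : Fin n1 → ℝ) (v : Fin n2 → ℝ)
    (g : Matrix (Fin n1) (Fin n1) ℝ) (hgsym : ∀ i j, g i j = g j i)
    (bh : Matrix (Fin n2) (Fin n2) ℝ) (ah : Fin n2 → Fin n2 → Fin n2 → ℝ)
    (gh : Matrix (Fin n2) (Fin n2) ℝ)
    (hgh : ∀ α β, gh α β = bh α β + (∑ σ, ah α β σ * v σ) - 4 * Kh * v α * v β)
    (F : ℝ) (hF : F = m0 + ∑ i, m i * u i) (hFpos : 0 < F)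
    (hgrad : ∀ i, (∑ j, g i j * m j) = F * (A i - 4 * K * u i))
    (hlen : (∑ i, ∑ j, g i j * m i * m j) = F * (4 * Kh - 4 * K * F))
    (y : Fin n2 → ℝ) (hy : ∀ α, y α = F * v α)
    (J G : Matrix (Fin n1 ⊕ Fin n2) (Fin n1 ⊕ Fin n2) ℝ)
    (hJ : J = Matrix.fromBlocks 1 0 (Matrix.of fun α i => v α * m i)
      (F • (1 : Matrix (Fin n2) (Fin n2) ℝ)))
    (hG : G = Matrix.fromBlocks g 0 0 (F⁻¹ • gh)) :
    J * G * Jᵀ =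
      Matrix.fromBlocks g
        (Matrix.of fun i α => (A i - 4 * K * u i) * y α)
        (Matrix.of fun α i => y α * (A i - 4 * K * u i))
        (Matrix.of fun α β =>
          (4 * Kh * F - 4 * K * F ^ 2) * v α * v β + F * gh α β) ∧
    J * G * Jᵀ =
      Matrix.fromBlocks g
        (Matrix.of fun i α => (A i - 4 * K * u i) * y α)
        (Matrix.of fun α i => y α * (A i - 4 * K * u i))
        (Matrix.of fun α β =>
          m0 * bh α β + (∑ σ, ah α β σ * y σ) + (∑ i, m i * u i) * bh α β
            - 4 * K * y α * y β) :=
  stmt18_general n1 n2 K Kh m0 m A u v g hgsym bh ah gh hgh F hF hgrad hlen y hy J G hJ hG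
end
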